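/- arXiv:1610.05719 — 5 statements merged into one kernel-verified Lean document; each statement's English description precedes it below -/
import Mathlib

section
/- Let S be a nonnegative n×n real matrix. Then there exists a Borel measure μ on 𝒞 × 𝒞 such that C(μ,k) = C(S,k) for every positive integer k. -/
open MeasureTheory Matrix
open scoped Pointwise

noncomputable section

/-- The Cantor set `{0,1}^ℕ`. -/
abbrev Cantor : Type := ℕ → Bool

/-- Cylinder set of a binary string given as a function `Fin n → Bool`. -/
def cylF {n : ℕ} (x : Fin n → Bool) : Set Cantor := {ω | ∀ i : Fin n, ω i = x i}

/-- Cylinder set of a binary string given as a list. -/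
def cyl (x : List Bool) : Set Cantor := {ω | ∀ i : Fin x.length, ω i = x.get i}

/-- `ν` is the fair coin-flipping (uniform product) measure on the Cantor set:
the unique Borel probability measure giving every cylinder of depth `n` mass `2⁻ⁿ`. -/
def IsCoinMeasure (ν : Measure Cantor) : Prop :=
  IsProbabilityMeasure ν ∧ ∀ (n : ℕ) (x : Fin n → Bool), ν (cylF x) = (1 / 2 : ENNReal) ^ n

/-- `K(k,n)`: nonnegative `k × I` matrices with all row sums `|I|/k` and all column sums `1`. -/
def Kset (k : ℕ) (I : Type) [Fintype I] : Set (Matrix (Fin k) I ℝ) :=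
  {M | (∀ i j, 0 ≤ M i j) ∧ (∀ i, ∑ j, M i j = (Fintype.card I : ℝ) / k) ∧
       (∀ j, ∑ i, M i j = 1)}

/-- The `k`-shape `C(S,k) = {M S Mᵀ : M ∈ K(k,n)}` of a square matrix `S`. -/
def matShape {I : Type} [Fintype I] (S : Matrix I I ℝ) (k : ℕ) :
    Set (Matrix (Fin k) (Fin k) ℝ) :=
  (fun M => M * S * Mᵀ) '' Kset k I

/-- `γ(S)`: the sum of all entries of `S`. -/
def gamma {I : Type} [Fintype I] (S : Matrix I I ℝ) : ℝ := ∑ i, ∑ j, S i j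

/-- The entrywise ℓ¹ norm of a matrix. -/
def l1 {k : ℕ} (A : Matrix (Fin k) (Fin k) ℝ) : ℝ := ∑ i, ∑ j, |A i j|

/-- The Hausdorff distance (w.r.t. the entrywise ℓ¹ norm) between `A` and `B` is at most `ε`. -/
def hdistLE {k : ℕ} (A B : Set (Matrix (Fin k) (Fin k) ℝ)) (ε : ℝ) : Prop :=
  (∀ X ∈ A, ∃ Y ∈ B, l1 (X - Y) ≤ ε) ∧ (∀ Y ∈ B, ∃ X ∈ A, l1 (X - Y) ≤ ε)

/-- Convergence of a sequence of shapes to `L` in the ℓ¹-Hausdorff metric. -/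
def ShapeTendsto {k : ℕ} (C : ℕ → Set (Matrix (Fin k) (Fin k) ℝ))
    (L : Set (Matrix (Fin k) (Fin k) ℝ)) : Prop :=
  ∀ ε : ℝ, 0 < ε → ∃ N : ℕ, ∀ n ≥ N, hdistLE (C n) L ε

/-- `C₀(μ,k)`: matrices `M` with `M i j = ∫ fᵢ(x) fⱼ(y) dμ` for a measurable partition of unity
`f₁,…,f_k` with `∫ fᵢ dν = 1/k`. -/
def mShape0 {α : Type} [MeasurableSpace α] (ν : Measure α) (μ : Measure (α × α)) (k : ℕ) :
    Set (Matrix (Fin k) (Fin k) ℝ) :=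
  {M | ∃ f : Fin k → α → ℝ,
    (∀ i, Measurable (f i)) ∧ (∀ i x, 0 ≤ f i x) ∧ (∀ x, ∑ i, f i x = 1) ∧
    (∀ i, ∫ x, f i x ∂ν = 1 / k) ∧
    (∀ i j, M i j = ∫ p, f i p.1 * f j p.2 ∂μ)}

/-- `C(μ,k)`: the topological closure of `C₀(μ,k)`. -/
def mShape {α : Type} [MeasurableSpace α] (ν : Measure α) (μ : Measure (α × α)) (k : ℕ) :
    Set (Matrix (Fin k) (Fin k) ℝ) := closure (mShape0 ν μ k)

/-- `C_c(μ,k)`: as `C₀(μ,k)` but with continuous witness functions. -/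
def mShapeC (ν : Measure Cantor) (μ : Measure (Cantor × Cantor)) (k : ℕ) :
    Set (Matrix (Fin k) (Fin k) ℝ) :=
  {M | ∃ f : Fin k → Cantor → ℝ,
    (∀ i, Continuous (f i)) ∧ (∀ i x, 0 ≤ f i x) ∧ (∀ x, ∑ i, f i x = 1) ∧
    (∀ i, ∫ x, f i x ∂ν = 1 / k) ∧
    (∀ i j, M i j = ∫ p, f i p.1 * f j p.2 ∂μ)}

open Classical in
/-- The real adjacency matrix of a simple graph. -/
def adjMat {V : Type} [Fintype V] (G : SimpleGraph V) : Matrix V V ℝ :=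
  fun a b => if G.Adj a b then 1 else 0

/-- `C₀(G,k) = ‖A_G‖₁⁻¹ ⬝ C(A_G,k)` for a finite graph `G`. -/
def graphShape {V : Type} [Fintype V] (G : SimpleGraph V) (k : ℕ) :
    Set (Matrix (Fin k) (Fin k) ℝ) :=
  (gamma (adjMat G))⁻¹ • matShape (adjMat G) k

/-- `K̂(k,m)`: characteristic matrices of balanced partitions of `{1,…,m}` into `k` classes. -/
def Khat (k m : ℕ) : Set (Matrix (Fin k) (Fin m) ℝ) :=
  {M | (∀ i j, M i j = 0 ∨ M i j = 1) ∧ (∀ j, ∑ i, M i j = 1) ∧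
       (∀ i, ∑ j, M i j = (⌈(m : ℝ) / k⌉₊ : ℝ) ∨ ∑ j, M i j = (⌊(m : ℝ) / k⌋₊ : ℝ))}

/-- `C̃₀(μ,α)`: matrices coming from a measurable partition of unity with `∫ fᵢ dν = αᵢ`. -/
def tShape0 {α : Type} [MeasurableSpace α] (ν : Measure α) (μ : Measure (α × α)) {m : ℕ}
    (a : Fin m → ℝ) : Set (Matrix (Fin m) (Fin m) ℝ) :=
  {M | ∃ f : Fin m → α → ℝ,
    (∀ i, Measurable (f i)) ∧ (∀ i x, 0 ≤ f i x) ∧ (∀ x, ∑ i, f i x = 1) ∧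
    (∀ i, ∫ x, f i x ∂ν = a i) ∧
    (∀ i j, M i j = ∫ p, f i p.1 * f j p.2 ∂μ)}

/-- `C̃(μ,α)`: the topological closure of `C̃₀(μ,α)`. -/
def tShape {α : Type} [MeasurableSpace α] (ν : Measure α) (μ : Measure (α × α)) {m : ℕ}
    (a : Fin m → ℝ) : Set (Matrix (Fin m) (Fin m) ℝ) := closure (tShape0 ν μ a)

/-- The Hausdorff distance w.r.t. the entrywise ℓ∞ norm between `A` and `B` is at most `ε`. -/
def hdistInfLE {m : ℕ} (A B : Set (Matrix (Fin m) (Fin m) ℝ)) (ε : ℝ) : Prop :=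
  (∀ X ∈ A, ∃ Y ∈ B, ∀ i j, |X i j - Y i j| ≤ ε) ∧
  (∀ Y ∈ B, ∃ X ∈ A, ∀ i j, |X i j - Y i j| ≤ ε)

/-!
Cut the Cantor set into `n` measurable pieces `A i = c⁻¹' {i}` of coin measure `1/n`, and let `μ`
carry the mass `n² S i j · ν|A i ⊗ ν|A j` on the block `A i × A j`. For a partition of unity `f`
with `∫ f a dν = 1/k`, the fibre averages `M a i = n ∫_{A i} f a dν` form a matrix in `K(k,n)` with
`∫ f a (x) f b (y) dμ = (M S Mᵀ) a b`; conversely every `M ∈ K(k,n)` is the matrix of fibre averages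
of the step functions `M a (c x)`. Hence `C₀(μ,k) = C(S,k)`, and this set is already closed, being
a continuous image of the compact set `K(k,n)`.

The pieces come from the sets `E t` formed by the dyadic cylinders lying below `t`: they increase
with `t` and `ν (E t) = lim ⌊2ᵐ t⌋ / 2ᵐ = t`.
-/

open scoped NNReal
open Set Filter Topology

lemma Nat.mul_floor_le_floor_mul (m : ℕ) (x : ℝ) : m * ⌊x⌋₊ ≤ ⌊x * m⌋₊ := by
  rcases le_or_gt 0 x with hx | hx
  · refine Nat.le_floor ?_
    push_cast
    rw [mul_comm]
    exact mul_le_mul_of_nonneg_right (Nat.floor_le hx) m.cast_nonneg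
  · simp [Nat.floor_eq_zero.2 (hx.trans one_pos)]

namespace Cantor

def take (m : ℕ) (ω : Cantor) : Fin m → Bool := fun i => ω i

lemma measurable_take (m : ℕ) : Measurable (take m) :=
  measurable_pi_lambda _ fun _ => measurable_pi_apply _

lemma take_preimage_singleton {m : ℕ} (w : Fin m → Bool) : take m ⁻¹' {w} = cylF w := by
  ext ω
  simp [take, cylF, funext_iff]

lemma _root_.IsCoinMeasure.measure_take_preimage {ν : Measure Cantor} (hν : IsCoinMeasure ν)
    {m : ℕ} (G : Finset (Fin m → Bool)) : ν (take m ⁻¹' G) = G.card * (1 / 2) ^ m := by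
  rw [← Measure.map_apply (measurable_take m) G.finite_toSet.measurableSet,
    ← sum_measure_singleton]
  simp_rw [Measure.map_apply (measurable_take m) (measurableSet_singleton _),
    take_preimage_singleton, hν.2]
  simp

def binEquiv (m : ℕ) : (Fin m → Bool) ≃ Fin (2 ^ m) :=
  (Equiv.arrowCongr Fin.revPerm finTwoEquiv.symm).trans finFunctionFinEquiv

/-- The index `j` of the dyadic interval `[j / 2ᵐ, (j + 1) / 2ᵐ)` spelled by the first `m` bits
of `ω`, most significant bit first. -/
def dyadicIndex (m : ℕ) (ω : Cantor) : ℕ := binEquiv m (take m ω)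

lemma dyadicIndex_succ (m : ℕ) (ω : Cantor) :
    dyadicIndex (m + 1) ω = 2 * dyadicIndex m ω + (ω m).toNat := by
  simp only [dyadicIndex, binEquiv, Equiv.trans_apply, finFunctionFinEquiv_apply,
    Equiv.arrowCongr_apply, Fin.sum_univ_succ, Finset.mul_sum]
  rw [add_comm]
  congr 1
  · refine Finset.sum_congr rfl fun i _ => ?_
    simp only [Function.comp_apply, take, Fin.revPerm_symm, Fin.revPerm_apply, Fin.val_rev,
      Fin.val_succ, Nat.reduceSubDiff, pow_succ]
    ring
  · cases h : ω m <;> simp [take, h, finTwoEquiv]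

def dyadicApprox (t : ℝ) (m : ℕ) : Set Cantor := {ω | dyadicIndex m ω < ⌊t * 2 ^ m⌋₊}

/-- The union of the dyadic cylinders whose interval lies in `[0, t]`. -/
def dyadicLowerSet (t : ℝ) : Set Cantor := ⋃ m, dyadicApprox t m

lemma dyadicApprox_eq_preimage (t : ℝ) (m : ℕ) :
    dyadicApprox t m = take m ⁻¹' {w | (binEquiv m w : ℕ) < ⌊t * 2 ^ m⌋₊} := rfl

lemma monotone_dyadicApprox (t : ℝ) : Monotone (dyadicApprox t) := by
  refine monotone_nat_of_le_succ fun m ω (hω : dyadicIndex m ω < _) => ?_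
  have h_floor := Nat.mul_floor_le_floor_mul 2 (t * 2 ^ m)
  have h_bit : (ω m).toNat ≤ 1 := Bool.toNat_le _
  change dyadicIndex (m + 1) ω < ⌊t * 2 ^ (m + 1)⌋₊
  rw [dyadicIndex_succ, pow_succ, ← mul_assoc]
  push_cast at h_floor
  omega

lemma monotone_dyadicLowerSet : Monotone dyadicLowerSet := fun _ _ hst =>
  iUnion_mono fun _ _ (hω : _ < _) => hω.trans_le <| Nat.floor_le_floor <| by gcongr

lemma measurableSet_dyadicLowerSet (t : ℝ) : MeasurableSet (dyadicLowerSet t) :=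
  .iUnion fun m => dyadicApprox_eq_preimage t m ▸ measurable_take m (toFinite _).measurableSet

lemma dyadicLowerSet_one : dyadicLowerSet 1 = univ :=
  eq_univ_of_forall fun _ => mem_iUnion.2 ⟨0, by simp [dyadicApprox, dyadicIndex]⟩

lemma _root_.IsCoinMeasure.measureReal_dyadicApprox {ν : Measure Cantor} (hν : IsCoinMeasure ν)
    {t : ℝ} (ht : t ≤ 1) (m : ℕ) :
    ν.real (dyadicApprox t m) = ⌊t * 2 ^ m⌋₊ / 2 ^ m := by
  have hK : ⌊t * 2 ^ m⌋₊ ≤ 2 ^ m :=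
    Nat.floor_le_of_le (by norm_cast; nlinarith [pow_pos (two_pos (α := ℝ)) m])
  have hcard : (Finset.univ.filter fun w => (binEquiv m w : ℕ) < ⌊t * 2 ^ m⌋₊).card =
      ⌊t * 2 ^ m⌋₊ := by
    rw [Finset.card_equiv (binEquiv m)
      (t := Finset.univ.filter fun j : Fin (2 ^ m) => (j : ℕ) < ⌊t * 2 ^ m⌋₊)
      (by simp), Fin.card_filter_val_lt, min_eq_right hK]
  rw [measureReal_def, dyadicApprox_eq_preimage, ← Finset.coe_filter_univ,
    hν.measure_take_preimage, hcard]
  simp [div_eq_mul_inv]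

lemma _root_.IsCoinMeasure.measureReal_dyadicLowerSet {ν : Measure Cantor} (hν : IsCoinMeasure ν)
    {t : ℝ} (ht0 : 0 ≤ t) (ht1 : t ≤ 1) : ν.real (dyadicLowerSet t) = t := by
  have := hν.1
  have hlim : Tendsto (fun m => ν.real (dyadicApprox t m)) atTop
      (𝓝 (ν.real (dyadicLowerSet t))) :=
    (ENNReal.tendsto_toReal (measure_ne_top _ _)).comp
      (tendsto_measure_iUnion_atTop (monotone_dyadicApprox t))
  refine tendsto_nhds_unique hlim ?_
  simp_rw [hν.measureReal_dyadicApprox ht1]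
  exact (tendsto_nat_floor_mul_div_atTop ht0).comp (tendsto_pow_atTop_atTop_of_one_lt one_lt_two)

end Cantor

theorem exists_measurable_measureReal_fiber_eq_inv {α : Type*} [MeasurableSpace α]
    {ν : Measure α} [IsFiniteMeasure ν] (E : ℝ → Set α) (hE_mono : Monotone E)
    (hE_meas : ∀ t, MeasurableSet (E t)) (hE_one : E 1 = univ)
    (hE : ∀ t ∈ Icc (0 : ℝ) 1, ν.real (E t) = t) (n : ℕ) [NeZero n] :
    ∃ c : α → Fin n, Measurable c ∧ ∀ i, ν.real (c ⁻¹' {i}) = (n : ℝ)⁻¹ := by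
  classical
  have hn : 0 < n := NeZero.pos n
  have hnR : (0 : ℝ) < n := Nat.cast_pos.2 hn
  have hlast (x : α) : x ∈ E (((n - 1 : ℕ) + 1 : ℝ) / n) := by
    rw [Nat.cast_pred hn, sub_add_cancel, div_self hnR.ne', hE_one]
    exact mem_univ x
  have hex (x : α) : ∃ j : ℕ, x ∈ E ((j + 1) / n) := ⟨_, hlast x⟩
  -- `c x` is the first `j` with `x ∈ E ((j + 1) / n)`
  let c : α → Fin n := fun x =>
    ⟨Nat.find (hex x), (Nat.find_min' _ (hlast x)).trans_lt (Nat.sub_lt hn one_pos)⟩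
  have hc_lt_succ (j : ℕ) : {x | (c x : ℕ) < j + 1} = E ((j + 1) / n) := by
    ext x
    simp only [mem_ofPred_eq, c, Nat.lt_succ_iff, Nat.find_le_iff]
    exact ⟨fun ⟨i, hij, hi⟩ => hE_mono (by gcongr) hi, fun h => ⟨j, le_rfl, h⟩⟩
  have hc_lt (j : ℕ) (hj : j ≤ n) :
      MeasurableSet {x | (c x : ℕ) < j} ∧ ν.real {x | (c x : ℕ) < j} = j / n := by
    rcases j with _ | j
    · simp
    · rw [hc_lt_succ, hE _ ⟨by positivity, div_le_one_of_le₀ (by exact_mod_cast hj) hnR.le⟩]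
      exact ⟨hE_meas _, by push_cast; rfl⟩
  have hfiber (i : Fin n) : c ⁻¹' {i} = {x | (c x : ℕ) < i + 1} \ {x | (c x : ℕ) < i} := by
    ext x
    simp only [mem_preimage, mem_singleton_iff, Set.mem_sdiff, mem_ofPred_eq, Fin.ext_iff, not_lt]
    omega
  refine ⟨c, measurable_to_countable' fun i => ?_, fun i => ?_⟩
  · rw [hfiber]
    exact (hc_lt _ i.isLt).1.diff (hc_lt _ i.isLt.le).1
  · have hsub : {x | (c x : ℕ) < i} ⊆ {x | (c x : ℕ) < i + 1} :=
      fun _ hx => Nat.lt_succ_of_lt hx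
    rw [hfiber, measureReal_sdiff hsub (hc_lt _ i.isLt.le).1, (hc_lt _ i.isLt).2,
      (hc_lt _ i.isLt.le).2]
    push_cast
    ring

section BlockMeasure

variable {α : Type*} [MeasurableSpace α] {ν : Measure α} {n : ℕ} {c : α → Fin n}

def blockMeasure (ν : Measure α) (c : α → Fin n) (S : Matrix (Fin n) (Fin n) ℝ) :
    Measure (α × α) :=
  ∑ i, ∑ j, ((n : ℝ≥0) ^ 2 * (S i j).toNNReal) •
    (ν.restrict (c ⁻¹' {i})).prod (ν.restrict (c ⁻¹' {j}))

def fiberAverage (ν : Measure α) (c : α → Fin n) {k : ℕ} (f : Fin k → α → ℝ) :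
    Matrix (Fin k) (Fin n) ℝ :=
  fun a i => n * ∫ x in c ⁻¹' {i}, f a x ∂ν

lemma integrable_of_sum_eq_one [IsFiniteMeasure ν] {ι : Type*} [Fintype ι]
    {f : ι → α → ℝ} (hf_meas : ∀ a, Measurable (f a)) (hf_nonneg : ∀ a x, 0 ≤ f a x)
    (hf_sum : ∀ x, ∑ a, f a x = 1) (a : ι) : Integrable (f a) ν :=
  .of_bound (hf_meas a).aestronglyMeasurable 1 <| ae_of_all _ fun x => by
    rw [Real.norm_of_nonneg (hf_nonneg a x), ← hf_sum x]
    exact Finset.single_le_sum (fun b _ => hf_nonneg b x) (Finset.mem_univ a)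

lemma sum_setIntegral_fiber (hc : Measurable c) {g : α → ℝ} (hg : Integrable g ν) :
    ∑ i, ∫ x in c ⁻¹' {i}, g x ∂ν = ∫ x, g x ∂ν := by
  rw [← integral_iUnion_fintype (fun i => hc (measurableSet_singleton i))
    (pairwise_disjoint_fiber c) fun _ => hg.integrableOn, ← preimage_iUnion, iUnion_of_singleton,
    preimage_univ, Measure.restrict_univ]

lemma integral_comp_eq_sum_fiber [IsFiniteMeasure ν] (hc : Measurable c) (g : Fin n → ℝ) :
    ∫ x, g (c x) ∂ν = ∑ i, ν.real (c ⁻¹' {i}) * g i := by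
  rw [← integral_map hc.aemeasurable (by fun_prop), integral_fintype .of_finite]
  simp [map_measureReal_apply hc (measurableSet_singleton _)]

lemma integral_mul_blockMeasure [IsFiniteMeasure ν] {S : Matrix (Fin n) (Fin n) ℝ}
    (hS : ∀ i j, 0 ≤ S i j) {k : ℕ} {f : Fin k → α → ℝ}
    (hf : ∀ a, Integrable (f a) ν) (a b : Fin k) :
    ∫ p, f a p.1 * f b p.2 ∂blockMeasure ν c S =
      (fiberAverage ν c f * S * (fiberAverage ν c f)ᵀ) a b := by
  have hint (i j : Fin n) : Integrable (fun p : α × α => f a p.1 * f b p.2)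
      (((n : ℝ≥0) ^ 2 * (S i j).toNNReal) •
        (ν.restrict (c ⁻¹' {i})).prod (ν.restrict (c ⁻¹' {j}))) :=
    ((hf a).restrict.mul_prod (hf b).restrict).smul_measure_nnreal
  rw [blockMeasure, integral_finsetSum_measure fun i _ =>
    integrable_finsetSum_measure.2 fun j _ => hint i j]
  simp_rw [integral_finsetSum_measure (fun j _ => hint _ j), integral_smul_nnreal_measure,
    integral_prod_mul, Matrix.mul_apply, Finset.sum_mul, Matrix.transpose_apply]
  conv_rhs => rw [Finset.sum_comm]
  refine Finset.sum_congr rfl fun i _ => Finset.sum_congr rfl fun j _ => ?_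
  simp only [fiberAverage, NNReal.smul_def, smul_eq_mul, NNReal.coe_mul, NNReal.coe_pow,
    NNReal.coe_natCast, Real.coe_toNNReal _ (hS i j)]
  ring

lemma fiberAverage_mem_Kset [IsFiniteMeasure ν] (hc : Measurable c)
    (hcν : ∀ i, ν.real (c ⁻¹' {i}) = (n : ℝ)⁻¹) {k : ℕ} {f : Fin k → α → ℝ}
    (hf_meas : ∀ a, Measurable (f a)) (hf_nonneg : ∀ a x, 0 ≤ f a x)
    (hf_sum : ∀ x, ∑ a, f a x = 1) (hf_int : ∀ a, ∫ x, f a x ∂ν = 1 / k) :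
    fiberAverage ν c f ∈ Kset k (Fin n) := by
  have hf := integrable_of_sum_eq_one (ν := ν) hf_meas hf_nonneg hf_sum
  refine ⟨fun a i => ?_, fun a => ?_, fun i => ?_⟩
  · exact mul_nonneg n.cast_nonneg (integral_nonneg (hf_nonneg a))
  · simp only [fiberAverage]
    rw [← Finset.mul_sum, sum_setIntegral_fiber hc (hf a), hf_int, Fintype.card_fin]
    ring
  · have hn : (n : ℝ) ≠ 0 := Nat.cast_ne_zero.2 (Fin.pos i).ne'
    simp only [fiberAverage]
    rw [← Finset.mul_sum, ← integral_finsetSum _ fun a _ => (hf a).integrableOn]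
    simp [hf_sum, hcν, hn]

lemma fiberAverage_comp (hc : Measurable c) (hcν : ∀ i, ν.real (c ⁻¹' {i}) = (n : ℝ)⁻¹)
    {k : ℕ} (M : Matrix (Fin k) (Fin n) ℝ) : fiberAverage ν c (fun a x => M a (c x)) = M := by
  ext a i
  have hn : (n : ℝ) ≠ 0 := Nat.cast_ne_zero.2 (Fin.pos i).ne'
  rw [fiberAverage, setIntegral_congr_fun (hc (measurableSet_singleton i))
    (g := fun _ => M a i) fun x hx => by rw [mem_preimage.1 hx]]
  simp [hcν, hn]

end BlockMeasure

lemma mShape0_blockMeasure {α : Type} [MeasurableSpace α] {ν : Measure α} [IsFiniteMeasure ν]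
    {n : ℕ} [NeZero n] {c : α → Fin n} (hc : Measurable c)
    (hcν : ∀ i, ν.real (c ⁻¹' {i}) = (n : ℝ)⁻¹) {S : Matrix (Fin n) (Fin n) ℝ}
    (hS : ∀ i j, 0 ≤ S i j) (k : ℕ) : mShape0 ν (blockMeasure ν c S) k = matShape S k := by
  ext M
  constructor
  · rintro ⟨f, hf_meas, hf_nonneg, hf_sum, hf_int, hM⟩
    refine ⟨fiberAverage ν c f,
      fiberAverage_mem_Kset hc hcν hf_meas hf_nonneg hf_sum hf_int, ?_⟩
    ext a b
    rw [hM, integral_mul_blockMeasure hS (integrable_of_sum_eq_one hf_meas hf_nonneg hf_sum)]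
  · rintro ⟨M, ⟨hM_nonneg, hM_row, hM_col⟩, rfl⟩
    have hf_meas (a : Fin k) : Measurable fun x => M a (c x) := (measurable_of_countable _).comp hc
    have hf_nonneg (a : Fin k) (x : α) : 0 ≤ M a (c x) := hM_nonneg a (c x)
    have hf_sum (x : α) : ∑ a, M a (c x) = 1 := hM_col (c x)
    refine ⟨fun a x => M a (c x), hf_meas, hf_nonneg, hf_sum, fun a => ?_, fun a b => ?_⟩
    · rw [integral_comp_eq_sum_fiber hc]
      simp only [hcν, ← Finset.mul_sum, hM_row, Fintype.card_fin]
      field_simp [NeZero.ne n]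
    · rw [integral_mul_blockMeasure hS (integrable_of_sum_eq_one hf_meas hf_nonneg hf_sum),
        fiberAverage_comp hc hcν]

lemma mShape0_zero {α : Type} [MeasurableSpace α] (ν : Measure α) [IsProbabilityMeasure ν]
    {k : ℕ} (hk : 0 < k) : mShape0 ν 0 k = {0} := by
  refine eq_singleton_iff_unique_mem.2 ⟨⟨fun _ _ => 1 / k, fun _ => measurable_const,
    fun _ _ => by positivity, fun _ => ?_, fun _ => by simp, fun _ _ => by simp⟩, ?_⟩
  · simp [Finset.card_univ, Fintype.card_fin, hk.ne']
  · rintro M ⟨f, -, -, -, -, hM⟩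
    ext i j
    simp [hM]

lemma isCompact_Kset (k : ℕ) (I : Type) [Fintype I] : IsCompact (Kset k I) := by
  have hclosed : IsClosed (Kset k I) := by
    simp only [Kset, ofPred_and, ofPred_forall]
    refine .inter (isClosed_iInter fun i => isClosed_iInter fun j =>
      isClosed_le continuous_const (by fun_prop)) (.inter (isClosed_iInter fun i =>
        isClosed_eq (by fun_prop) continuous_const) (isClosed_iInter fun j =>
        isClosed_eq (by fun_prop) continuous_const))
  refine (isCompact_univ_pi fun _ => isCompact_univ_pi fun _ =>
    isCompact_Icc (a := (0 : ℝ)) (b := 1)).of_isClosed_subset hclosed ?_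
  rintro M ⟨hM_nonneg, -, hM_col⟩ i - j -
  exact ⟨hM_nonneg i j, hM_col j ▸ Finset.single_le_sum (fun i' _ => hM_nonneg i' j)
    (Finset.mem_univ i)⟩

lemma isClosed_matShape {I : Type} [Fintype I] (S : Matrix I I ℝ) (k : ℕ) :
    IsClosed (matShape S k) :=
  ((isCompact_Kset k I).image <| (continuous_id.matrix_mul continuous_const).matrix_mul
    continuous_id.matrix_transpose).isClosed

lemma matShape_of_isEmpty {I : Type} [Fintype I] [IsEmpty I] (S : Matrix I I ℝ) (k : ℕ) :
    matShape S k = {0} := by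
  have hzero (M : Matrix (Fin k) I ℝ) : M * S * Mᵀ = 0 := by
    ext
    simp [Matrix.mul_apply]
  refine eq_singleton_iff_unique_mem.2
    ⟨⟨0, ⟨fun _ _ => le_rfl, fun _ => by simp, isEmptyElim⟩, hzero 0⟩, ?_⟩
  rintro _ ⟨M, -, rfl⟩
  exact hzero M

/-- Every nonnegative `n × n` matrix `S` is represented by a Borel measure `μ`
on `𝒞 × 𝒞` with `C(μ,k) = C(S,k)` for every `k`. -/
theorem stmt_8 (ν : Measure Cantor) (hν : IsCoinMeasure ν) (n : ℕ)
    (S : Matrix (Fin n) (Fin n) ℝ) (hnn : ∀ i j, 0 ≤ S i j) :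
    ∃ μ : Measure (Cantor × Cantor), ∀ k : ℕ, 0 < k → mShape ν μ k = matShape S k := by
  have := hν.1
  rcases eq_or_ne n 0 with rfl | hn
  · refine ⟨0, fun k hk => ?_⟩
    rw [mShape, mShape0_zero ν hk, closure_singleton, matShape_of_isEmpty]
  have := NeZero.mk hn
  obtain ⟨c, hc, hcν⟩ := exists_measurable_measureReal_fiber_eq_inv Cantor.dyadicLowerSet
    Cantor.monotone_dyadicLowerSet Cantor.measurableSet_dyadicLowerSet Cantor.dyadicLowerSet_one
    (fun t ht => hν.measureReal_dyadicLowerSet ht.1 ht.2) n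
  exact ⟨blockMeasure ν c S, fun k _ => by
    rw [mShape, mShape0_blockMeasure hc hcν hnn, (isClosed_matShape S k).closure_eq]⟩
end
end

section
/- Let μ be a finite Borel measure on 𝒞 × 𝒞 and let X be an element of C₀(μ,k) for some positive integer k. Then, viewing X as a nonnegative k×k matrix, C(X,r) ⊆ C(μ,r) for every positive integer r. -/
open MeasureTheory Matrix
open scoped Pointwise

noncomputable section

/-!
Mixing a partition of unity `f₁,…,f_k` with a matrix `M ∈ K(r,k)` gives the partition of unity
`gᵢ = ∑ₐ M i a • fₐ`: the column sums of `M` make the `gᵢ` sum to `1`, the row sums make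
`∫ gᵢ dν = (k/r)·(1/k) = 1/r`, and bilinearity of `(g, h) ↦ ∫ g(x) h(y) dμ` turns the
matrix of the `gᵢ` into `M X Mᵀ`. So `C(X,r)` already lies in `C₀(μ,r)`.
-/

lemma le_one_of_nonneg_of_sum_eq_one {ι : Type*} [Fintype ι] {w : ι → ℝ}
    (hw : ∀ i, 0 ≤ w i) (hsum : ∑ i, w i = 1) (a : ι) : w a ≤ 1 :=
  hsum ▸ Finset.single_le_sum (fun i _ => hw i) (Finset.mem_univ a)

section Mixing

variable {α : Type} [MeasurableSpace α] {ν : Measure α} {μ : Measure (α × α)}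

theorem integral_sum_mul_sum_eq_mul_mul_transpose {ι κ : Type*} [Fintype ι] [Fintype κ]
    (M : Matrix κ ι ℝ) {f : ι → α → ℝ}
    (hf : ∀ a b, Integrable (fun p : α × α => f a p.1 * f b p.2) μ) (i j : κ) :
    ∫ p, (∑ a, M i a * f a p.1) * (∑ b, M j b * f b p.2) ∂μ
      = (M * Matrix.of (fun a b => ∫ p, f a p.1 * f b p.2 ∂μ) * Mᵀ) i j := by
  have hexpand : ∀ p : α × α, (∑ a, M i a * f a p.1) * (∑ b, M j b * f b p.2)
      = ∑ a, ∑ b, M i a * M j b * (f a p.1 * f b p.2) := fun p => by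
    rw [Fintype.sum_mul_sum]
    exact Finset.sum_congr rfl fun a _ => Finset.sum_congr rfl fun b _ => by ring
  simp_rw [hexpand]
  rw [integral_finsetSum _ fun a _ => integrable_finsetSum _ fun b _ => (hf a b).const_mul _]
  simp_rw [integral_finsetSum _ fun b _ => (hf _ b).const_mul _, integral_const_mul,
    Matrix.mul_apply, Matrix.transpose_apply, Matrix.of_apply, Finset.sum_mul]
  rw [Finset.sum_comm]
  exact Finset.sum_congr rfl fun a _ => Finset.sum_congr rfl fun b _ => by ring

theorem mul_mul_transpose_mem_mShape0 [IsFiniteMeasure ν] [IsFiniteMeasure μ] {k r : ℕ}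
    (hk : k ≠ 0) {X : Matrix (Fin k) (Fin k) ℝ} (hX : X ∈ mShape0 ν μ k)
    {M : Matrix (Fin r) (Fin k) ℝ} (hM : M ∈ Kset r (Fin k)) :
    M * X * Mᵀ ∈ mShape0 ν μ r := by
  obtain ⟨f, hmeas, hnn, hsum, hint, hXf⟩ := hX
  obtain ⟨hMnn, hMrow, hMcol⟩ := hM
  have hle : ∀ a x, f a x ≤ 1 := fun a x =>
    le_one_of_nonneg_of_sum_eq_one (fun i => hnn i x) (hsum x) a
  have hintν : ∀ a, Integrable (f a) ν := fun a =>
    .of_bound (hmeas a).aestronglyMeasurable 1 (.of_forall fun x => by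
      rw [Real.norm_eq_abs, abs_of_nonneg (hnn a x)]; exact hle a x)
  have hintμ : ∀ a b, Integrable (fun p : α × α => f a p.1 * f b p.2) μ := fun a b =>
    .of_bound
      (((hmeas a).comp measurable_fst).mul ((hmeas b).comp measurable_snd)).aestronglyMeasurable 1
      (.of_forall fun p => by
        rw [Real.norm_eq_abs, abs_of_nonneg (mul_nonneg (hnn a p.1) (hnn b p.2))]
        exact mul_le_one₀ (hle a p.1) (hnn b p.2) (hle b p.2))
  have hXeq : X = Matrix.of fun a b => ∫ p, f a p.1 * f b p.2 ∂μ := Matrix.ext hXf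
  refine ⟨fun i x => ∑ a, M i a * f a x, fun i => ?_, fun i x => ?_, fun x => ?_, fun i => ?_,
    fun i j => ?_⟩
  · exact Finset.measurable_sum _ fun a _ => measurable_const.mul (hmeas a)
  · exact Finset.sum_nonneg fun a _ => mul_nonneg (hMnn i a) (hnn a x)
  · rw [Finset.sum_comm]
    simp_rw [← Finset.sum_mul, hMcol, one_mul]
    exact hsum x
  · rw [integral_finsetSum _ fun a _ => (hintν a).const_mul _]
    simp_rw [integral_const_mul, hint, ← Finset.sum_mul, hMrow, Fintype.card_fin]
    field_simp
  · rw [hXeq, integral_sum_mul_sum_eq_mul_mul_transpose M hintμ]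

end Mixing

theorem stmt_9_general (ν : Measure Cantor) (hν : IsCoinMeasure ν)
    (μ : Measure (Cantor × Cantor)) (hfin : IsFiniteMeasure μ)
    (k : ℕ) (hk : 0 < k) (X : Matrix (Fin k) (Fin k) ℝ) (hX : X ∈ mShape0 ν μ k)
    (r : ℕ) :
    matShape X r ⊆ mShape ν μ r := by
  rintro _ ⟨M, hM, rfl⟩
  have := hν.1
  exact subset_closure (mul_mul_transpose_mem_mShape0 hk.ne' hX hM)

/-- If `X ∈ C₀(μ,k)` then `C(X,r) ⊆ C(μ,r)` for every `r`. -/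
theorem stmt_9 (ν : Measure Cantor) (hν : IsCoinMeasure ν)
    (μ : Measure (Cantor × Cantor)) (hfin : IsFiniteMeasure μ)
    (k : ℕ) (hk : 0 < k) (X : Matrix (Fin k) (Fin k) ℝ) (hX : X ∈ mShape0 ν μ k)
    (r : ℕ) (hr : 0 < r) :
    matShape X r ⊆ mShape ν μ r :=
  stmt_9_general ν hν μ hfin k hk X hX r
end
end

section
/- Let (T_n)_{n≥0} be a consistent sequence of nonnegative symmetric tables (T_n a nonnegative 2ⁿ×2ⁿ matrix indexed by binary strings of length n with T_n(x,y) = T_{n+1}(x⌢0,y⌢0)+T_{n+1}(x⌢0,y⌢1)+T_{n+1}(x⌢1,y⌢0)+T_{n+1}(x⌢1,y⌢1)), and let μ be the symmetric Borel measure on 𝒞 × 𝒞 with μ(S_x × S_y) = T_n(x,y) for all strings x,y of length n. Then for every positive integer k, C(μ,k) equals the topological closure of ⋃_{n∈ℕ} C(T_n,k). -/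
open MeasureTheory Matrix
open scoped Pointwise

noncomputable section

/-!
A function of the first `N` coordinates is a matrix `M` with `2ᴺ` columns, and for such step
functions `fᵢ = Mᵢ ∘ res N` one has `∫ fᵢ(x) fⱼ(y) dμ = (M T_N Mᵀ)ᵢⱼ` and `∫ fᵢ dν` equal to the
row average of `M`; this gives `⋃ C(T_N,k) ⊆ C₀(μ,k)`.

Conversely, let `ρ = ν + μ₁ + μ₂` with `μ₁, μ₂` the marginals of `μ`. The map
`(f, g) ↦ ∫ f(x) g(y) dμ` on functions bounded by `1` is `1`-Lipschitz for the `L¹(μ₁)` and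
`L¹(μ₂)` norms, so it suffices to approximate a partition of unity `f` in `L¹(ρ)` by step
functions forming a column of some `M ∈ K(k, 2ᴺ)`. Continuous functions are uniform limits of
step functions, hence step functions are dense in `L¹(ρ)`, and the averages of `fᵢ` over the
cylinders of depth `N` are within a factor `2` of the best step approximation while still forming
a partition of unity. Their `ν`-integrals are then close to `1/k`, and a small affine correction
makes them exactly `1/k`.
-/

lemma abs_le_one_of_sum_eq_one {ι : Type*} [Fintype ι] {a : ι → ℝ} (ha : ∀ i, 0 ≤ a i)
    (hsum : ∑ i, a i = 1) (i : ι) : |a i| ≤ 1 := by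
  rw [abs_of_nonneg (ha i), ← hsum]
  exact Finset.single_le_sum (fun j _ => ha j) (Finset.mem_univ i)

lemma integrable_of_abs_le {α : Type*} [MeasurableSpace α] {μ : Measure α} [IsFiniteMeasure μ]
    {F : α → ℝ} (hF : Measurable F) (C : ℝ) (hC : ∀ x, |F x| ≤ C) : Integrable F μ :=
  .of_bound hF.aestronglyMeasurable C (ae_of_all _ hC)

lemma integral_abs_sub_le_integral_abs_sub_add {α : Type*} [MeasurableSpace α] {μ : Measure α}
    [IsFiniteMeasure μ] {f g h : α → ℝ} (hfg : Integrable (fun x => |f x - g x|) μ)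
    (hfh : Integrable (fun x => |f x - h x|) μ) {C : ℝ} (hC : ∀ x, |g x - h x| ≤ C) :
    ∫ x, |f x - h x| ∂μ ≤ ∫ x, |f x - g x| ∂μ + C * μ.real Set.univ := by
  calc ∫ x, |f x - h x| ∂μ ≤ ∫ x, (|f x - g x| + C) ∂μ :=
        integral_mono hfh (hfg.add (integrable_const C)) fun x => by
          linarith [abs_sub_le (f x) (g x) (h x), hC x]
    _ = ∫ x, |f x - g x| ∂μ + C * μ.real Set.univ := by
        rw [integral_add hfg (integrable_const C), integral_const, smul_eq_mul, mul_comm C]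

namespace Cantor

open Filter Uniformity

def res (n : ℕ) (ω : Cantor) : Fin n → Bool := fun i => ω i

def pad (n : ℕ) (x : Fin n → Bool) : Cantor := fun i => if h : i < n then x ⟨i, h⟩ else false

lemma measurable_res (n : ℕ) : Measurable (res n) :=
  measurable_pi_lambda _ fun i => measurable_pi_apply (i : ℕ)

lemma preimage_res_singleton {n : ℕ} (x : Fin n → Bool) : res n ⁻¹' {x} = cylF x := by
  ext ω
  simp [cylF, res, funext_iff]

lemma res_eq_of_mem_cylF {n : ℕ} {x : Fin n → Bool} {ω : Cantor} (h : ω ∈ cylF x) :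
    res n ω = x :=
  funext h

lemma measurableSet_cylF {n : ℕ} (x : Fin n → Bool) : MeasurableSet (cylF x) := by
  rw [← preimage_res_singleton]
  exact measurable_res n (measurableSet_singleton x)

lemma cylF_zero (x : Fin 0 → Bool) : cylF x = Set.univ := by
  ext ω
  simp [cylF]

lemma measurable_comp_res {n : ℕ} (c : (Fin n → Bool) → ℝ) : Measurable fun ω => c (res n ω) :=
  Measurable.of_discrete.comp (measurable_res n)

lemma integrable_comp_res (m : Measure Cantor) [IsFiniteMeasure m] {n : ℕ}
    (c : (Fin n → Bool) → ℝ) : Integrable (fun ω => c (res n ω)) m :=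
  (integrable_map_measure Measurable.of_discrete.aestronglyMeasurable
    (measurable_res n).aemeasurable).1 Integrable.of_finite

lemma integral_comp_res (m : Measure Cantor) [IsFiniteMeasure m] {n : ℕ}
    (c : (Fin n → Bool) → ℝ) : ∫ ω, c (res n ω) ∂m = ∑ x, m.real (cylF x) * c x := by
  rw [← integral_map (measurable_res n).aemeasurable Measurable.of_discrete.aestronglyMeasurable,
    integral_fintype .of_finite]
  refine Finset.sum_congr rfl fun x _ => ?_
  rw [map_measureReal_apply (measurable_res n) (measurableSet_singleton x),
    preimage_res_singleton, smul_eq_mul]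

lemma integral_comp_res_mul_comp_res (m : Measure (Cantor × Cantor)) [IsFiniteMeasure m] {n : ℕ}
    (c d : (Fin n → Bool) → ℝ) :
    ∫ p, c (res n p.1) * d (res n p.2) ∂m
      = ∑ x, ∑ y, m.real (cylF x ×ˢ cylF y) * (c x * d y) := by
  have hres : Measurable (Prod.map (res n) (res n)) :=
    (measurable_res n).prodMap (measurable_res n)
  have hmap := integral_map (μ := m) hres.aemeasurable
    (f := fun q : (Fin n → Bool) × (Fin n → Bool) => c q.1 * d q.2)
    Measurable.of_discrete.aestronglyMeasurable
  simp only [Prod.map_fst, Prod.map_snd] at hmap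
  rw [← hmap, integral_fintype .of_finite, Fintype.sum_prod_type]
  refine Finset.sum_congr rfl fun x _ => Finset.sum_congr rfl fun y _ => ?_
  rw [map_measureReal_apply hres (measurableSet_singleton _), ← Set.singleton_prod_singleton,
    Set.preimage_prod_map_prod, preimage_res_singleton, preimage_res_singleton, smul_eq_mul]

lemma integral_eq_sum_setIntegral_cylF (m : Measure Cantor) (n : ℕ) {f : Cantor → ℝ}
    (hf : Integrable f m) : ∫ ω, f ω ∂m = ∑ x : Fin n → Bool, ∫ ω in cylF x, f ω ∂m := by
  have hcover : (⋃ x : Fin n → Bool, cylF x) = Set.univ :=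
    Set.eq_univ_of_forall fun ω => Set.mem_iUnion.2 ⟨res n ω, fun _ => rfl⟩
  have hdisj : Pairwise (Function.onFun Disjoint fun x : Fin n → Bool => cylF x) := by
    intro x y hxy
    simp only [Function.onFun, ← preimage_res_singleton]
    exact (Set.disjoint_singleton.2 hxy).preimage _
  rw [← setIntegral_univ, ← hcover]
  exact integral_iUnion_fintype measurableSet_cylF hdisj fun x => hf.integrableOn

lemma tendstoUniformly_pad_res : TendstoUniformly (fun n ω => pad n (res n ω)) id atTop := by
  rw [tendstoUniformly_iff_tendsto, Pi.uniformity, tendsto_iInf]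
  intro i
  rw [tendsto_comap_iff, show 𝓤 Bool = 𝓟 SetRel.id from rfl, tendsto_principal]
  filter_upwards [(eventually_gt_atTop i).prod_inl ⊤] with q hq
  simp [pad, res, hq]

lemma eventually_exists_abs_sub_comp_res_lt {g : Cantor → ℝ} (hg : Continuous g) {ε : ℝ}
    (hε : 0 < ε) : ∀ᶠ n in atTop, ∃ c : (Fin n → Bool) → ℝ, ∀ ω, |g ω - c (res n ω)| < ε := by
  have hunif := (CompactSpace.uniformContinuous_of_continuous hg).comp_tendstoUniformly
    tendstoUniformly_pad_res
  filter_upwards [Metric.tendstoUniformly_iff.1 hunif ε hε] with n hn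
  exact ⟨fun x => g (pad n x), fun ω => by simpa [Real.dist_eq] using hn ω⟩

lemma eventually_exists_integral_abs_sub_comp_res_le (ρ : Measure Cantor) [IsFiniteMeasure ρ]
    {f : Cantor → ℝ} (hf : Integrable f ρ) {ε : ℝ} (hε : 0 < ε) :
    ∀ᶠ n in atTop, ∃ c : (Fin n → Bool) → ℝ, ∫ ω, |f ω - c (res n ω)| ∂ρ ≤ ε := by
  obtain ⟨g, hfg, hg⟩ := hf.exists_boundedContinuous_integral_sub_le (half_pos hε)
  simp only [Real.norm_eq_abs] at hfg
  set R := ρ.real Set.univ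
  have hR : 0 ≤ R := measureReal_nonneg
  have hη : 0 < ε / 2 / (R + 1) := by positivity
  filter_upwards [eventually_exists_abs_sub_comp_res_lt g.continuous hη] with n ⟨c, hc⟩
  refine ⟨c, ?_⟩
  calc ∫ ω, |f ω - c (res n ω)| ∂ρ ≤ ∫ ω, |f ω - g ω| ∂ρ + ε / 2 / (R + 1) * R :=
        integral_abs_sub_le_integral_abs_sub_add (hf.sub hg).abs
          (hf.sub (integrable_comp_res ρ c)).abs fun ω => (hc ω).le
    _ ≤ ε / 2 + ε / 2 * 1 := by
        rw [div_mul_eq_mul_div, mul_div_assoc]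
        gcongr
        exact div_le_one_of_le₀ (by linarith) (by linarith)
    _ = ε := by ring

def cylAvg (ρ : Measure Cantor) (d : ℝ) (f : Cantor → ℝ) {n : ℕ} (x : Fin n → Bool) : ℝ :=
  if ρ.real (cylF x) = 0 then d else (∫ ω in cylF x, f ω ∂ρ) / ρ.real (cylF x)

variable {ρ : Measure Cantor} {d : ℝ} {n : ℕ}

lemma cylAvg_nonneg {f : Cantor → ℝ} (hd : 0 ≤ d) (hf : ∀ ω, 0 ≤ f ω) (x : Fin n → Bool) :
    0 ≤ cylAvg ρ d f x := by
  unfold cylAvg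
  split_ifs
  · exact hd
  · exact div_nonneg (setIntegral_nonneg (measurableSet_cylF x) fun ω _ => hf ω)
      measureReal_nonneg

lemma sum_cylAvg {ι : Type*} [Fintype ι] [Nonempty ι] {f : ι → Cantor → ℝ}
    (hf : ∀ i, Integrable (f i) ρ) (hsum : ∀ ω, ∑ i, f i ω = 1) (x : Fin n → Bool) :
    ∑ i, cylAvg ρ (Fintype.card ι)⁻¹ (f i) x = 1 := by
  by_cases h0 : ρ.real (cylF x) = 0
  · simp [cylAvg, h0]
  · simp only [cylAvg, h0, if_false]
    rw [← Finset.sum_div, ← integral_finsetSum _ fun i _ => (hf i).integrableOn,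
      setIntegral_congr_fun (measurableSet_cylF x) fun ω _ => hsum ω, setIntegral_const,
      smul_eq_mul, mul_one, div_self h0]

lemma measureReal_mul_abs_sub_cylAvg_le [IsFiniteMeasure ρ] {f : Cantor → ℝ}
    (hf : Integrable f ρ) (c : ℝ) (x : Fin n → Bool) :
    ρ.real (cylF x) * |c - cylAvg ρ d f x| ≤ ∫ ω in cylF x, |f ω - c| ∂ρ := by
  by_cases h0 : ρ.real (cylF x) = 0
  · rw [h0, zero_mul]
    exact setIntegral_nonneg (measurableSet_cylF x) fun ω _ => abs_nonneg _
  · have hmass : ρ.real (cylF x) * (c - cylAvg ρ d f x) = ∫ ω in cylF x, (c - f ω) ∂ρ := by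
      rw [integral_sub (integrable_const c).integrableOn hf.integrableOn, setIntegral_const,
        smul_eq_mul, cylAvg, if_neg h0]
      field_simp
    rw [← abs_of_nonneg (measureReal_nonneg (μ := ρ) (s := cylF x)), ← abs_mul, hmass]
    refine (abs_integral_le_integral_abs).trans_eq ?_
    simp only [abs_sub_comm]

lemma integral_abs_sub_cylAvg_le [IsFiniteMeasure ρ] {f : Cantor → ℝ} (hf : Integrable f ρ)
    (c : (Fin n → Bool) → ℝ) :
    ∫ ω, |f ω - cylAvg ρ d f (res n ω)| ∂ρ ≤ 2 * ∫ ω, |f ω - c (res n ω)| ∂ρ := by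
  have hfc : Integrable (fun ω => |f ω - c (res n ω)|) ρ := (hf.sub (integrable_comp_res ρ c)).abs
  have hca : Integrable (fun ω => |c (res n ω) - cylAvg ρ d f (res n ω)|) ρ :=
    integrable_comp_res ρ fun x => |c x - cylAvg ρ d f x|
  have hstep : ∫ ω, |c (res n ω) - cylAvg ρ d f (res n ω)| ∂ρ ≤ ∫ ω, |f ω - c (res n ω)| ∂ρ := by
    rw [integral_comp_res ρ fun x => |c x - cylAvg ρ d f x|,
      integral_eq_sum_setIntegral_cylF ρ n hfc]
    refine Finset.sum_le_sum fun x _ => ?_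
    rw [setIntegral_congr_fun (measurableSet_cylF x) fun ω hω => by
      rw [res_eq_of_mem_cylF hω]]
    exact measureReal_mul_abs_sub_cylAvg_le hf (c x) x
  calc ∫ ω, |f ω - cylAvg ρ d f (res n ω)| ∂ρ
      ≤ ∫ ω, (|f ω - c (res n ω)| + |c (res n ω) - cylAvg ρ d f (res n ω)|) ∂ρ :=
        integral_mono (hf.sub (integrable_comp_res ρ _)).abs (hfc.add hca)
          fun ω => abs_sub_le _ _ _
    _ ≤ 2 * ∫ ω, |f ω - c (res n ω)| ∂ρ := by
        rw [integral_add hfc hca]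
        linarith

lemma eventually_integral_abs_sub_cylAvg_le [IsFiniteMeasure ρ] {f : Cantor → ℝ}
    (hf : Integrable f ρ) (d : ℝ) {ε : ℝ} (hε : 0 < ε) :
    ∀ᶠ n in atTop, ∫ ω, |f ω - cylAvg ρ d f (res n ω)| ∂ρ ≤ ε := by
  filter_upwards [eventually_exists_integral_abs_sub_comp_res_le ρ hf (half_pos hε)]
    with n ⟨c, hc⟩
  linarith [integral_abs_sub_cylAvg_le (d := d) hf c]

end Cantor

open Cantor

lemma sub_div_one_add_mem_Icc {k η b : ℝ} (hk : 0 < k) (hη : 0 ≤ η) (hb : |b - 1 / k| ≤ η) :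
    1 / k - b / (1 + k * η) ∈ Set.Icc 0 (2 * η) := by
  obtain ⟨h1, h2⟩ := abs_sub_le_iff.1 hb
  have hs : 0 < 1 + k * η := by positivity
  have heq : 1 / k - b / (1 + k * η) = (1 / k + η - b) / (1 + k * η) := by
    field_simp
  rw [heq]
  refine ⟨div_nonneg (by linarith) hs.le, ?_⟩
  rw [div_le_iff₀ hs]
  nlinarith [mul_nonneg hk.le hη]

lemma sub_div_one_add_mem_Icc_of_le_one {a c : ℝ} (ha0 : 0 ≤ a) (ha1 : a ≤ 1) (hc : 0 ≤ c) :
    a - a / (1 + c) ∈ Set.Icc 0 c := by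
  have hs : 0 < 1 + c := by positivity
  have heq : a - a / (1 + c) = a * c / (1 + c) := by
    field_simp
    ring
  rw [heq]
  refine ⟨by positivity, ?_⟩
  rw [div_le_iff₀ hs]
  nlinarith [mul_nonneg ha0 hc]

/-- Scaling `a` down by `1 + kη` leaves room to add to each row a nonnegative constant that
restores its average to `1/k`. -/
lemma exists_mem_Kset_abs_sub_le {k : ℕ} (hk : 0 < k) {X : Type} [Fintype X] [Nonempty X]
    (a : Fin k → X → ℝ) (ha : ∀ i x, 0 ≤ a i x) (hcol : ∀ x, ∑ i, a i x = 1)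
    {η : ℝ} (hη : 0 ≤ η) (hrow : ∀ i, |(∑ x, a i x) / Fintype.card X - 1 / k| ≤ η) :
    ∃ M ∈ Kset k X, ∀ i x, |M i x - a i x| ≤ (k + 2) * η := by
  have hk' : (0 : ℝ) < k := Nat.cast_pos.2 hk
  have hX : (0 : ℝ) < Fintype.card X := Nat.cast_pos.2 Fintype.card_pos
  set b : Fin k → ℝ := fun i => (∑ x, a i x) / Fintype.card X
  set s : ℝ := 1 + k * η
  have hs : 0 < s := by positivity
  have hc : ∀ i, 1 / k - b i / s ∈ Set.Icc 0 (2 * η) := fun i =>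
    sub_div_one_add_mem_Icc hk' hη (hrow i)
  have hsumb : ∑ i, b i = 1 := by
    simp only [b, ← Finset.sum_div]
    rw [Finset.sum_comm, Finset.sum_congr rfl fun x _ => hcol x]
    simp [hX.ne']
  refine ⟨fun i x => a i x / s + (1 / k - b i / s), ⟨fun i x => ?_, fun i => ?_, fun x => ?_⟩,
    fun i x => ?_⟩
  · exact add_nonneg (div_nonneg (ha i x) hs.le) (hc i).1
  · rw [Finset.sum_add_distrib, ← Finset.sum_div, Finset.sum_const, Finset.card_univ,
      nsmul_eq_mul]
    simp only [b]
    field_simp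
    ring
  · rw [Finset.sum_add_distrib, Finset.sum_sub_distrib, ← Finset.sum_div,
      ← Finset.sum_div (f := b), hcol, hsumb, Finset.sum_const, Finset.card_univ, Fintype.card_fin,
      nsmul_eq_mul]
    field_simp
    ring
  · have hshift := sub_div_one_add_mem_Icc_of_le_one (ha i x)
      (abs_le.1 (abs_le_one_of_sum_eq_one (ha · x) (hcol x) i)).2 (mul_nonneg hk'.le hη)
    change |a i x / s + (1 / k - b i / s) - a i x| ≤ (k + 2) * η
    rw [abs_le]
    constructor <;> linarith [(hc i).1, (hc i).2, hshift.1, hshift.2]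

lemma abs_integral_mul_sub_integral_mul_le {α β : Type*} [MeasurableSpace α] [MeasurableSpace β]
    (μ : Measure (α × β)) [IsFiniteMeasure μ] {f h : α → ℝ} {g l : β → ℝ}
    (hf : Measurable f) (hh : Measurable h) (hg : Measurable g) (hl : Measurable l)
    (hf1 : ∀ x, |f x| ≤ 1) (hh1 : ∀ x, |h x| ≤ 1) (hg1 : ∀ y, |g y| ≤ 1) (hl1 : ∀ y, |l y| ≤ 1) :
    |∫ p, f p.1 * g p.2 ∂μ - ∫ p, h p.1 * l p.2 ∂μ|
      ≤ ∫ x, |f x - h x| ∂μ.map Prod.fst + ∫ y, |g y - l y| ∂μ.map Prod.snd := by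
  have hfg := integrable_of_abs_le (μ := μ) (F := fun p => f p.1 * g p.2) (by fun_prop) 1
    fun p => by rw [abs_mul]; exact mul_le_one₀ (hf1 p.1) (abs_nonneg _) (hg1 p.2)
  have hhl := integrable_of_abs_le (μ := μ) (F := fun p => h p.1 * l p.2) (by fun_prop) 1
    fun p => by rw [abs_mul]; exact mul_le_one₀ (hh1 p.1) (abs_nonneg _) (hl1 p.2)
  have hfh := integrable_of_abs_le (μ := μ) (F := fun p => |f p.1 - h p.1|) (by fun_prop) 2
    fun p => by rw [abs_abs]; linarith [abs_sub (f p.1) (h p.1), hf1 p.1, hh1 p.1]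
  have hgl := integrable_of_abs_le (μ := μ) (F := fun p => |g p.2 - l p.2|) (by fun_prop) 2
    fun p => by rw [abs_abs]; linarith [abs_sub (g p.2) (l p.2), hg1 p.2, hl1 p.2]
  have hpoint : ∀ p : α × β,
      |f p.1 * g p.2 - h p.1 * l p.2| ≤ |f p.1 - h p.1| + |g p.2 - l p.2| := fun p => by
    have hsplit : f p.1 * g p.2 - h p.1 * l p.2
        = (f p.1 - h p.1) * g p.2 + h p.1 * (g p.2 - l p.2) := by ring
    rw [hsplit]
    refine (abs_add_le _ _).trans (add_le_add ?_ ?_) <;> rw [abs_mul]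
    · exact mul_le_of_le_one_right (abs_nonneg _) (hg1 p.2)
    · exact mul_le_of_le_one_left (abs_nonneg _) (hh1 p.1)
  rw [integral_map measurable_fst.aemeasurable (by fun_prop),
    integral_map measurable_snd.aemeasurable (by fun_prop), ← integral_sub hfg hhl,
    ← integral_add hfh hgl]
  exact abs_integral_le_integral_abs.trans (integral_mono (hfg.sub hhl).abs (hfh.add hgl) hpoint)

lemma mul_mul_transpose_apply_eq_integral {κ : Type*} {n : ℕ} (μ : Measure (Cantor × Cantor))
    [IsFiniteMeasure μ] {S : Matrix (Fin n → Bool) (Fin n → Bool) ℝ} (hS : ∀ x y, 0 ≤ S x y)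
    (hμS : ∀ x y, μ (cylF x ×ˢ cylF y) = ENNReal.ofReal (S x y))
    (M : Matrix κ (Fin n → Bool) ℝ) (i j : κ) :
    (M * S * Mᵀ) i j = ∫ p, M i (res n p.1) * M j (res n p.2) ∂μ := by
  have hμS' : ∀ x y, μ.real (cylF x ×ˢ cylF y) = S x y := fun x y => by
    rw [measureReal_def, hμS, ENNReal.toReal_ofReal (hS x y)]
  simp only [integral_comp_res_mul_comp_res, hμS', Matrix.mul_apply, Matrix.transpose_apply,
    Finset.sum_mul]
  rw [Finset.sum_comm]
  exact Finset.sum_congr rfl fun x _ => Finset.sum_congr rfl fun y _ => by ring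

lemma integral_comp_res_of_isCoinMeasure {ν : Measure Cantor} (hν : IsCoinMeasure ν) {n : ℕ}
    (c : (Fin n → Bool) → ℝ) :
    ∫ ω, c (res n ω) ∂ν = (∑ x, c x) / Fintype.card (Fin n → Bool) := by
  have := hν.1
  simp only [integral_comp_res, measureReal_def, hν.2, Fintype.card_fun, Fintype.card_bool,
    Fintype.card_fin, ← Finset.mul_sum]
  simp [div_eq_inv_mul]

lemma matShape_subset_mShape0 {ν : Measure Cantor} (hν : IsCoinMeasure ν)
    {μ : Measure (Cantor × Cantor)} [IsFiniteMeasure μ] {n : ℕ}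
    {S : Matrix (Fin n → Bool) (Fin n → Bool) ℝ} (hS : ∀ x y, 0 ≤ S x y)
    (hμS : ∀ x y, μ (cylF x ×ˢ cylF y) = ENNReal.ofReal (S x y)) (k : ℕ) :
    matShape S k ⊆ mShape0 ν μ k := by
  rintro _ ⟨M, ⟨hM0, hMrow, hMcol⟩, rfl⟩
  refine ⟨fun i ω => M i (res n ω), fun i => measurable_comp_res _, fun i ω => hM0 i _,
    fun ω => hMcol _, fun i => ?_, mul_mul_transpose_apply_eq_integral μ hS hμS M⟩
  rw [integral_comp_res_of_isCoinMeasure hν, hMrow i, div_right_comm,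
    div_self (by positivity)]

lemma exists_mem_Kset_integral_abs_sub_comp_res_le {ν ρ : Measure Cantor} (hν : IsCoinMeasure ν)
    [IsFiniteMeasure ρ] (hνρ : ν ≤ ρ) {k : ℕ} (hk : 0 < k) {f : Fin k → Cantor → ℝ}
    (hf : ∀ i, Measurable (f i)) (hf0 : ∀ i ω, 0 ≤ f i ω) (hsum : ∀ ω, ∑ i, f i ω = 1)
    (hνf : ∀ i, ∫ ω, f i ω ∂ν = 1 / k) {ε : ℝ} (hε : 0 < ε) :
    ∃ N, ∃ M ∈ Kset k (Fin N → Bool), ∀ i, ∫ ω, |f i ω - M i (res N ω)| ∂ρ ≤ ε := by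
  have : Nonempty (Fin k) := ⟨⟨0, hk⟩⟩
  have := hν.1
  have hfint : ∀ i, Integrable (f i) ρ := fun i =>
    integrable_of_abs_le (hf i) 1 fun ω => abs_le_one_of_sum_eq_one (hf0 · ω) (hsum ω) i
  set R := ρ.real Set.univ
  have hR : 0 ≤ R := measureReal_nonneg
  set η := ε / (1 + (k + 2) * R)
  have hη : 0 < η := by positivity
  obtain ⟨N, hN⟩ := (Filter.eventually_all.2 fun i =>
    eventually_integral_abs_sub_cylAvg_le (hfint i) (Fintype.card (Fin k))⁻¹ hη).exists
  set a : Fin k → (Fin N → Bool) → ℝ := fun i => cylAvg ρ (Fintype.card (Fin k))⁻¹ (f i)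
  have hfa : ∀ i, Integrable (fun ω => |f i ω - a i (res N ω)|) ρ := fun i =>
    ((hfint i).sub (integrable_comp_res ρ _)).abs
  have hrow : ∀ i, |(∑ x, a i x) / Fintype.card (Fin N → Bool) - 1 / k| ≤ η := fun i => by
    rw [← integral_comp_res_of_isCoinMeasure hν, ← hνf i,
      ← integral_sub (integrable_comp_res ν _) ((hfint i).mono_measure hνρ)]
    calc |∫ ω, (a i (res N ω) - f i ω) ∂ν| ≤ ∫ ω, |f i ω - a i (res N ω)| ∂ν := by
          exact abs_integral_le_integral_abs.trans_eq (by simp only [abs_sub_comm])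
      _ ≤ ∫ ω, |f i ω - a i (res N ω)| ∂ρ :=
          integral_mono_measure hνρ (ae_of_all _ fun ω => abs_nonneg _) (hfa i)
      _ ≤ η := hN i
  obtain ⟨M, hM, hMa⟩ := exists_mem_Kset_abs_sub_le hk a
    (fun i => cylAvg_nonneg (by positivity) (hf0 i)) (sum_cylAvg hfint hsum) hη.le hrow
  refine ⟨N, M, hM, fun i => ?_⟩
  calc ∫ ω, |f i ω - M i (res N ω)| ∂ρ
      ≤ ∫ ω, |f i ω - a i (res N ω)| ∂ρ + (k + 2) * η * R :=
        integral_abs_sub_le_integral_abs_sub_add (hfa i)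
          ((hfint i).sub (integrable_comp_res ρ _)).abs fun ω => by
            rw [abs_sub_comm]; exact hMa i (res N ω)
    _ ≤ η + (k + 2) * η * R := by linarith [hN i]
    _ = ε := by
        simp only [η]
        field_simp

lemma mem_closure_of_forall_abs_sub_le {ι κ : Type*} [Fintype ι] [Fintype κ]
    {S : Set (Matrix ι κ ℝ)} {A : Matrix ι κ ℝ}
    (h : ∀ δ > 0, ∃ B ∈ S, ∀ i j, |A i j - B i j| ≤ δ) : A ∈ closure S := by
  -- `Matrix ι κ ℝ` carries the topology of `ι → κ → ℝ`, which is that of the sup metric.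
  refine (Metric.mem_closure_iff (α := ι → κ → ℝ)).2 fun δ hδ => ?_
  obtain ⟨B, hB, hAB⟩ := h (δ / 2) (half_pos hδ)
  refine ⟨B, hB, (dist_pi_lt_iff hδ).2 fun i => (dist_pi_lt_iff hδ).2 fun j => ?_⟩
  rw [Real.dist_eq]
  linarith [hAB i j]

lemma mShape0_subset_closure_iUnion_matShape {ν : Measure Cantor} (hν : IsCoinMeasure ν)
    {μ : Measure (Cantor × Cantor)} [IsFiniteMeasure μ]
    (T : (n : ℕ) → Matrix (Fin n → Bool) (Fin n → Bool) ℝ) (hT : ∀ n x y, 0 ≤ T n x y)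
    (hμT : ∀ n (x y : Fin n → Bool), μ (cylF x ×ˢ cylF y) = ENNReal.ofReal (T n x y))
    {k : ℕ} (hk : 0 < k) :
    mShape0 ν μ k ⊆ closure (⋃ n, matShape (T n) k) := by
  rintro A ⟨f, hf, hf0, hsum, hνf, hA⟩
  have := hν.1
  set ρ := ν + (μ.map Prod.fst + μ.map Prod.snd)
  refine mem_closure_of_forall_abs_sub_le fun δ hδ => ?_
  obtain ⟨N, M, hM, hfM⟩ := exists_mem_Kset_integral_abs_sub_comp_res_le hν (ρ := ρ)
    (Measure.le_add_right le_rfl) hk hf hf0 hsum hνf (half_pos hδ)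
  refine ⟨M * T N * Mᵀ, Set.mem_iUnion.2 ⟨N, M, hM, rfl⟩, fun i j => ?_⟩
  have hf1 : ∀ i ω, |f i ω| ≤ 1 := fun i ω => abs_le_one_of_sum_eq_one (hf0 · ω) (hsum ω) i
  have hM1 : ∀ i ω, |M i (res N ω)| ≤ 1 := fun i ω =>
    abs_le_one_of_sum_eq_one (hM.1 · _) (hM.2.2 _) i
  have hmarg : ∀ i (m : Measure Cantor), m ≤ ρ →
      ∫ ω, |f i ω - M i (res N ω)| ∂m ≤ δ / 2 := fun i m hm =>
    (integral_mono_measure hm (ae_of_all _ fun ω => abs_nonneg _)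
      (integrable_of_abs_le (F := fun ω => |f i ω - M i (res N ω)|)
        ((hf i).sub (measurable_comp_res (M i))).abs 2 fun ω => by
        rw [abs_abs]
        linarith [abs_sub (f i ω) (M i (res N ω)), hf1 i ω, hM1 i ω])).trans (hfM i)
  rw [hA, mul_mul_transpose_apply_eq_integral μ (hT N) (hμT N)]
  refine (abs_integral_mul_sub_integral_mul_le μ (hf i) (measurable_comp_res _) (hf j)
    (measurable_comp_res _) (hf1 i) (hM1 i) (hf1 j) (hM1 j)).trans ?_
  linarith [hmarg i _ (Measure.le_add_left (Measure.le_add_right le_rfl)),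
    hmarg j _ (Measure.le_add_left (Measure.le_add_left le_rfl))]

theorem stmt_11_general (ν : Measure Cantor) (hν : IsCoinMeasure ν)
    (T : (n : ℕ) → Matrix (Fin n → Bool) (Fin n → Bool) ℝ)
    (hnn : ∀ (n : ℕ) (x y : Fin n → Bool), 0 ≤ T n x y)
    (μ : Measure (Cantor × Cantor))
    (hμ : ∀ (n : ℕ) (x y : Fin n → Bool), μ (cylF x ×ˢ cylF y) = ENNReal.ofReal (T n x y))
    (k : ℕ) (hk : 0 < k) :
    mShape ν μ k = closure (⋃ n : ℕ, matShape (T n) k) := by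
  have : IsFiniteMeasure μ := by
    have hμ0 := hμ 0 Fin.elim0 Fin.elim0
    rw [cylF_zero, Set.univ_prod_univ] at hμ0
    exact ⟨hμ0 ▸ ENNReal.ofReal_lt_top⟩
  exact subset_antisymm
    (closure_minimal (mShape0_subset_closure_iUnion_matShape hν T hnn hμ hk) isClosed_closure)
    (closure_mono (Set.iUnion_subset fun n => matShape_subset_mShape0 hν (hnn n) (hμ n) k))

/-- If `μ` is the measure on `𝒞 × 𝒞` associated with a consistent sequence of
nonnegative symmetric tables `(Tₙ)`, then `C(μ,k)` is the closure of `⋃ₙ C(Tₙ,k)`. -/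
theorem stmt_11 (ν : Measure Cantor) (hν : IsCoinMeasure ν)
    (T : (n : ℕ) → Matrix (Fin n → Bool) (Fin n → Bool) ℝ)
    (hnn : ∀ (n : ℕ) (x y : Fin n → Bool), 0 ≤ T n x y)
    (hsymm : ∀ (n : ℕ) (x y : Fin n → Bool), T n x y = T n y x)
    (hcons : ∀ (n : ℕ) (x y : Fin n → Bool),
      T n x y = T (n + 1) (Fin.snoc x false) (Fin.snoc y false)
        + T (n + 1) (Fin.snoc x false) (Fin.snoc y true)
        + T (n + 1) (Fin.snoc x true) (Fin.snoc y false)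
        + T (n + 1) (Fin.snoc x true) (Fin.snoc y true))
    (μ : Measure (Cantor × Cantor))
    (hμ : ∀ (n : ℕ) (x y : Fin n → Bool), μ (cylF x ×ˢ cylF y) = ENNReal.ofReal (T n x y))
    (k : ℕ) (hk : 0 < k) :
    mShape ν μ k = closure (⋃ n : ℕ, matShape (T n) k) :=
  stmt_11_general ν hν T hnn μ hμ k hk
end
end

section
/- Let c > 0 and let k, t be positive integers. Then for every nonnegative n×n real matrix S with γ(S) = c, the Hausdorff distance between C(C(S,t),k) and C(S,k) is at most 2ck/t, where C(C(S,t),k) := ⋃_{X ∈ C(S,t)} C(X,k). -/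
open MeasureTheory Matrix
open scoped Pointwise

noncomputable section

/-! Split `[0, t]` into `k` intervals of length `t / k` and let `N ∈ K(k,t)` record their
overlaps with the unit cells `[m, m + 1]`. For `M ∈ K(k,n)` the matrix `P = (k/t) Nᵀ M` lies in
`K(t,n)`, and `N P = C M` with `C = (k/t) N Nᵀ` column-stochastic. An interval meets at most two
cells in a fractional length, so `C` has diagonal at least `1 - k/(2t)`; hence every column of
`N P - M` has ℓ¹ norm at most `k/t`, and expanding `M S Mᵀ` bilinearly gives `2 γ(S) k/t`.
Conversely `K(k,t) K(t,n) ⊆ K(k,n)`, so `C(C(S,t),k) ⊆ C(S,k)`. -/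

def overlap (a b x y : ℝ) : ℝ := max 0 (min b y - max a x)

lemma overlap_nonneg (a b x y : ℝ) : 0 ≤ overlap a b x y := le_max_left _ _

lemma overlap_comm (a b x y : ℝ) : overlap a b x y = overlap x y a b := by
  simp only [overlap, min_comm, max_comm]

lemma overlap_eq_sub {a b x y : ℝ} (hab : a ≤ b) (hxy : x ≤ y) :
    overlap a b x y = min b (max a y) - min b (max a x) := by
  unfold overlap
  rcases le_total a x with h1 | h1 <;> rcases le_total a y with h2 | h2 <;>
    rcases le_total b x with h3 | h3 <;> rcases le_total b y with h4 | h4 <;>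
    simp only [min_def, max_def] <;> split_ifs <;> linarith

lemma sum_overlap_grid (q : ℕ) {s a b : ℝ} (hs : 0 ≤ s) (ha : 0 ≤ a) (hab : a ≤ b)
    (hb : b ≤ q * s) : ∑ i : Fin q, overlap a b (i * s) ((i + 1) * s) = b - a := by
  set g : ℕ → ℝ := fun j => min b (max a (j * s))
  have hg : ∀ i : Fin q, overlap a b (i * s) ((i + 1) * s) = g (i + 1) - g i := fun i => by
    rw [overlap_eq_sub hab (by nlinarith)]
    push_cast [g]
    rfl
  rw [Fintype.sum_congr _ _ hg, Fin.sum_univ_eq_sum_range (fun i => g (i + 1) - g i),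
    Finset.sum_range_sub]
  simp only [g, Nat.cast_zero, zero_mul, max_eq_left ha, max_eq_right (hab.trans hb),
    min_eq_left hb, min_eq_right hab]

lemma overlap_unit_eq_zero_or_one {a b : ℝ} (m : ℕ)
    (ha : ¬ ((m : ℝ) < a ∧ a < m + 1)) (hb : ¬ ((m : ℝ) < b ∧ b < m + 1)) :
    overlap a b m (m + 1) = 0 ∨ overlap a b m (m + 1) = 1 := by
  unfold overlap
  rcases le_or_gt (m + 1 : ℝ) a with h1 | h1
  · exact .inl (max_eq_left (by linarith [min_le_right b ((m : ℝ) + 1), le_max_left a (m : ℝ)]))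
  rcases le_or_gt b m with h2 | h2
  · exact .inl (max_eq_left (by linarith [min_le_left b ((m : ℝ) + 1), le_max_right a (m : ℝ)]))
  have ha' : a ≤ m := not_lt.1 fun h => ha ⟨h, h1⟩
  have hb' : m + 1 ≤ b := not_lt.1 fun h => hb ⟨h2, h⟩
  right
  rw [max_eq_right ha', min_eq_right hb']
  norm_num

lemma sum_ite_val_eq_le {t : ℕ} (v : ℕ) {c : ℝ} (hc : 0 ≤ c) :
    ∑ m : Fin t, (if (m : ℕ) = v then c else 0) ≤ c := by
  rw [Fin.sum_univ_eq_sum_range (fun m => if m = v then c else 0), Finset.sum_ite_eq']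
  split_ifs <;> simp [hc]

lemma sum_overlap_unit_sq_ge (t : ℕ) {a b : ℝ} (ha : 0 ≤ a) (hab : a ≤ b) (hb : b ≤ t) :
    b - a - 1 / 2 ≤ ∑ m : Fin t, overlap a b m (m + 1) ^ 2 := by
  have hsum : ∑ m : Fin t, overlap a b m (m + 1) = b - a := by
    simpa using sum_overlap_grid t zero_le_one ha hab (by simpa using hb)
  -- only the cells containing `a` or `b` in their interior carry a fractional overlap
  have hcell : ∀ m : Fin t, overlap a b m (m + 1) - overlap a b m (m + 1) ^ 2
      ≤ (if (m : ℕ) = ⌊a⌋₊ then 1 / 4 else 0) + (if (m : ℕ) = ⌊b⌋₊ then 1 / 4 else 0) := by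
    intro m
    set o := overlap a b m (m + 1)
    have hq : o - o ^ 2 ≤ 1 / 4 := by nlinarith [sq_nonneg (o - 1 / 2)]
    have hite : ∀ x : ℝ, (0 : ℝ) ≤ if (m : ℕ) = ⌊x⌋₊ then 1 / 4 else 0 := fun x => by
      split_ifs <;> norm_num
    by_cases hA : (m : ℝ) < a ∧ a < m + 1
    · rw [if_pos ((Nat.floor_eq_iff ha).2 ⟨hA.1.le, hA.2⟩).symm]
      linarith [hite b]
    by_cases hB : (m : ℝ) < b ∧ b < m + 1
    · rw [if_pos ((Nat.floor_eq_iff (ha.trans hab)).2 ⟨hB.1.le, hB.2⟩).symm]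
      linarith [hite a]
    rcases overlap_unit_eq_zero_or_one m hA hB with h | h <;>
      simp only [o, h] <;> linarith [hite a, hite b]
  have := Finset.sum_le_sum fun m (_ : m ∈ Finset.univ) => hcell m
  rw [Finset.sum_sub_distrib, hsum, Finset.sum_add_distrib] at this
  linarith [sum_ite_val_eq_le (t := t) ⌊a⌋₊ (by norm_num : (0 : ℝ) ≤ 1 / 4),
    sum_ite_val_eq_le (t := t) ⌊b⌋₊ (by norm_num : (0 : ℝ) ≤ 1 / 4)]

def intervalMatrix (k t : ℕ) : Matrix (Fin k) (Fin t) ℝ :=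
  Matrix.of fun i m => overlap (i * (t / k)) ((i + 1) * (t / k)) m (m + 1)

section intervalMatrix

variable {k : ℕ} (t : ℕ)

lemma intervalMatrix_endpoints (hk : k ≠ 0) (i : Fin k) :
    0 ≤ (i : ℝ) * (t / k) ∧ (i : ℝ) * (t / k) ≤ (i + 1) * (t / k) ∧
      ((i : ℝ) + 1) * (t / k) ≤ t := by
  have hs : (0 : ℝ) ≤ t / k := by positivity
  refine ⟨by positivity, by nlinarith, ?_⟩
  calc ((i : ℝ) + 1) * (t / k) ≤ k * (t / k) := by
        gcongr; exact_mod_cast i.isLt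
    _ = t := mul_div_cancel₀ _ (Nat.cast_ne_zero.2 hk)

lemma intervalMatrix_mem_Kset (hk : k ≠ 0) : intervalMatrix k t ∈ Kset k (Fin t) := by
  refine ⟨fun i m => overlap_nonneg _ _ _ _, fun i => ?_, fun m => ?_⟩
  · obtain ⟨h0, hab, hb⟩ := intervalMatrix_endpoints t hk i
    simpa [intervalMatrix, add_mul, div_eq_mul_inv] using
      sum_overlap_grid t zero_le_one h0 hab (by simpa using hb)
  · have hm : (m : ℝ) + 1 ≤ k * (t / k) := by
      rw [mul_div_cancel₀ _ (Nat.cast_ne_zero.2 hk)]; exact_mod_cast m.isLt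
    simpa [intervalMatrix, overlap_comm (m : ℝ)] using
      sum_overlap_grid k (by positivity) (Nat.cast_nonneg m) (by linarith) hm

lemma sum_intervalMatrix_sq_ge (hk : k ≠ 0) (i : Fin k) :
    (t : ℝ) / k - 1 / 2 ≤ ∑ m, intervalMatrix k t i m ^ 2 := by
  obtain ⟨h0, hab, hb⟩ := intervalMatrix_endpoints t hk i
  have := sum_overlap_unit_sq_ge t h0 hab hb
  simp only [intervalMatrix, Matrix.of_apply]
  linarith

end intervalMatrix

section Kset

variable {I : Type} [Fintype I] {k t : ℕ}

lemma sum_abs_col_of_mem_Kset {M : Matrix (Fin k) I ℝ} (hM : M ∈ Kset k I) (a : I) :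
    ∑ i, |M i a| = 1 := by
  simpa only [abs_of_nonneg (hM.1 _ a)] using hM.2.2 a

lemma mul_mem_Kset (ht : t ≠ 0) {N : Matrix (Fin k) (Fin t) ℝ} {P : Matrix (Fin t) I ℝ}
    (hN : N ∈ Kset k (Fin t)) (hP : P ∈ Kset t I) : N * P ∈ Kset k I := by
  obtain ⟨hN0, hNr, hNc⟩ := hN
  obtain ⟨hP0, hPr, hPc⟩ := hP
  refine ⟨fun i a => ?_, fun i => ?_, fun a => ?_⟩ <;> simp only [Matrix.mul_apply]
  · exact Finset.sum_nonneg fun m _ => mul_nonneg (hN0 i m) (hP0 m a)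
  · rw [Finset.sum_comm]
    simp only [← Finset.mul_sum, hPr, ← Finset.sum_mul, hNr, Fintype.card_fin]
    field_simp
  · rw [Finset.sum_comm]
    simp only [← Finset.sum_mul, hNc, one_mul, hPc]

lemma smul_transpose_mul_mem_Kset (hk : k ≠ 0) (ht : t ≠ 0) {N : Matrix (Fin k) (Fin t) ℝ}
    {M : Matrix (Fin k) I ℝ} (hN : N ∈ Kset k (Fin t)) (hM : M ∈ Kset k I) :
    ((k : ℝ) / t) • Nᵀ * M ∈ Kset t I := by
  obtain ⟨hN0, hNr, hNc⟩ := hN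
  obtain ⟨hM0, hMr, hMc⟩ := hM
  have happ : ∀ m a, (((k : ℝ) / t) • Nᵀ * M) m a = (k / t) * ∑ i, N i m * M i a := fun m a => by
    simp only [Matrix.smul_apply, Matrix.mul_apply, Matrix.transpose_apply,
      smul_eq_mul, Finset.mul_sum, mul_assoc]
  refine ⟨fun m a => ?_, fun m => ?_, fun a => ?_⟩ <;> simp only [happ]
  · exact mul_nonneg (by positivity) (Finset.sum_nonneg fun i _ => mul_nonneg (hN0 i m) (hM0 i a))
  · rw [← Finset.mul_sum, Finset.sum_comm]
    simp only [← Finset.mul_sum, hMr, ← Finset.sum_mul, hNc]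
    field_simp
  · rw [← Finset.mul_sum, Finset.sum_comm]
    simp only [← Finset.sum_mul, hNr, ← Finset.mul_sum, hMc, Fintype.card_fin]
    field_simp

lemma matShape_subset_of_mem_matShape (ht : t ≠ 0) {S : Matrix I I ℝ}
    {X : Matrix (Fin t) (Fin t) ℝ} (hX : X ∈ matShape S t) : matShape X k ⊆ matShape S k := by
  obtain ⟨P, hP, rfl⟩ := hX
  rintro _ ⟨N, hN, rfl⟩
  exact ⟨N * P, mul_mem_Kset ht hN hP, by simp only [Matrix.transpose_mul, Matrix.mul_assoc]⟩

end Kset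

section ColumnDeviation

variable {ι κ μ : Type*} [Fintype ι] [Fintype κ]

lemma sum_abs_mul_apply_le (A : Matrix ι κ ℝ) (B : Matrix κ μ ℝ) (a : μ) :
    ∑ i, |(A * B) i a| ≤ ∑ j, (∑ i, |A i j|) * |B j a| := by
  simp only [Matrix.mul_apply, Finset.sum_mul, ← abs_mul]
  rw [Finset.sum_comm]
  exact Finset.sum_le_sum fun i _ => Finset.abs_sum_le_sum_abs _ _

variable [DecidableEq ι] {C : Matrix ι ι ℝ}

lemma sum_abs_sub_one_apply (hC : ∀ i j, 0 ≤ C i j) (hC1 : ∀ j, ∑ i, C i j = 1) (j : ι) :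
    ∑ i, |(C - 1) i j| = 2 * (1 - C j j) := by
  have hjj : C j j ≤ 1 := hC1 j ▸ Finset.single_le_sum (fun i _ => hC i j) (Finset.mem_univ j)
  have hoff : ∑ i ∈ Finset.univ.erase j, |(C - 1) i j| = ∑ i ∈ Finset.univ.erase j, C i j :=
    Finset.sum_congr rfl fun i hi => by
      rw [Matrix.sub_apply, Matrix.one_apply_ne (Finset.ne_of_mem_erase hi), sub_zero,
        abs_of_nonneg (hC i j)]
  have hcol := hC1 j
  rw [← Finset.add_sum_erase _ _ (Finset.mem_univ j)] at hcol ⊢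
  rw [hoff, Matrix.sub_apply, Matrix.one_apply_eq, abs_of_nonpos (by linarith)]
  linarith

lemma sum_abs_mul_sub_apply_le (hC : ∀ i j, 0 ≤ C i j) (hC1 : ∀ j, ∑ i, C i j = 1) {δ : ℝ}
    (hδ : ∀ j, 1 - δ ≤ C j j) (B : Matrix ι μ ℝ) (a : μ) :
    ∑ i, |(C * B - B) i a| ≤ 2 * δ * ∑ j, |B j a| := by
  calc ∑ i, |(C * B - B) i a| = ∑ i, |((C - 1 : Matrix ι ι ℝ) * B) i a| := by
        rw [Matrix.sub_mul, Matrix.one_mul]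
    _ ≤ ∑ j, (∑ i, |(C - 1) i j|) * |B j a| := sum_abs_mul_apply_le _ _ a
    _ ≤ ∑ j, 2 * δ * |B j a| := Finset.sum_le_sum fun j _ => by
        rw [sum_abs_sub_one_apply hC hC1 j]
        gcongr
        linarith [hδ j]
    _ = 2 * δ * ∑ j, |B j a| := (Finset.mul_sum _ _ _).symm

end ColumnDeviation

lemma exists_mul_mem_Kset_near {I : Type} [Fintype I] {k t : ℕ} (hk : k ≠ 0) (ht : t ≠ 0)
    {M : Matrix (Fin k) I ℝ} (hM : M ∈ Kset k I) :
    ∃ N ∈ Kset k (Fin t), ∃ P ∈ Kset t I, ∀ a, ∑ i, |(N * P - M) i a| ≤ k / t := by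
  set N := intervalMatrix k t
  have hN : N ∈ Kset k (Fin t) := intervalMatrix_mem_Kset t hk
  set C : Matrix (Fin k) (Fin k) ℝ := ((k : ℝ) / t) • (N * Nᵀ)
  have hCapp : ∀ i j, C i j = k / t * ∑ m, N i m * N j m := fun i j => by
    simp only [C, Matrix.smul_apply, Matrix.mul_apply, Matrix.transpose_apply, smul_eq_mul]
  have hC0 : ∀ i j, 0 ≤ C i j := fun i j => by
    rw [hCapp]
    exact mul_nonneg (by positivity) (Finset.sum_nonneg fun m _ => mul_nonneg (hN.1 i m) (hN.1 j m))
  have hC1 : ∀ j, ∑ i, C i j = 1 := fun j => by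
    simp only [hCapp, ← Finset.mul_sum]
    rw [Finset.sum_comm]
    simp only [← Finset.sum_mul, hN.2.2, one_mul, hN.2.1, Fintype.card_fin]
    field_simp
  have hCdiag : ∀ j, 1 - k / (2 * t) ≤ C j j := fun j => by
    rw [hCapp]
    calc 1 - (k : ℝ) / (2 * t) = k / t * (t / k - 1 / 2) := by field_simp
      _ ≤ k / t * ∑ m, N j m * N j m := by
        simp only [← sq]
        gcongr
        exact sum_intervalMatrix_sq_ge t hk j
  refine ⟨N, hN, _, smul_transpose_mul_mem_Kset hk ht hN hM, fun a => ?_⟩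
  have hNP : N * (((k : ℝ) / t) • Nᵀ * M) = C * M := by
    simp only [C, Matrix.smul_mul, Matrix.mul_smul, Matrix.mul_assoc]
  calc ∑ i, |(N * (((k : ℝ) / t) • Nᵀ * M) - M) i a|
      ≤ 2 * (k / (2 * t)) * ∑ j, |M j a| := hNP ▸ sum_abs_mul_sub_apply_le hC0 hC1 hCdiag M a
    _ = k / t := by
      rw [sum_abs_col_of_mem_Kset hM]
      field_simp

section L1

variable {I : Type} [Fintype I] {k : ℕ}

lemma l1_add_le (A B : Matrix (Fin k) (Fin k) ℝ) : l1 (A + B) ≤ l1 A + l1 B := by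
  simp only [l1, ← Finset.sum_add_distrib]
  exact Finset.sum_le_sum fun i _ => Finset.sum_le_sum fun j _ => abs_add_le _ _

lemma l1_mul_mul_transpose_le (A B : Matrix (Fin k) I ℝ) (S : Matrix I I ℝ) :
    l1 (A * S * Bᵀ) ≤ ∑ a, ∑ b, |S a b| * ((∑ i, |A i a|) * ∑ j, |B j b|) := by
  calc l1 (A * S * Bᵀ) ≤ ∑ i, ∑ j, ∑ a, ∑ b, |A i a| * |S a b| * |B j b| := by
        refine Finset.sum_le_sum fun i _ => Finset.sum_le_sum fun j _ => ?_
        simp only [Matrix.mul_apply, Matrix.transpose_apply, Finset.sum_mul]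
        rw [Finset.sum_comm]
        refine (Finset.abs_sum_le_sum_abs _ _).trans (Finset.sum_le_sum fun a _ => ?_)
        refine (Finset.abs_sum_le_sum_abs _ _).trans (Finset.sum_le_sum fun b _ => ?_)
        rw [abs_mul, abs_mul]
    _ = ∑ a, ∑ b, |S a b| * ((∑ i, |A i a|) * ∑ j, |B j b|) := by
        rw [Finset.sum_comm_cycle]
        refine Finset.sum_congr rfl fun a _ => Finset.sum_comm_cycle.trans ?_
        simp only [Finset.sum_mul_sum]
        simp only [Finset.mul_sum]
        exact Finset.sum_congr rfl fun b _ => Finset.sum_congr rfl fun i _ =>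
          Finset.sum_congr rfl fun j _ => by ring

lemma gamma_nonneg {S : Matrix I I ℝ} (hS : ∀ a b, 0 ≤ S a b) : 0 ≤ gamma S :=
  Finset.sum_nonneg fun a _ => Finset.sum_nonneg fun b _ => hS a b

lemma l1_mul_mul_transpose_sub_le {S : Matrix I I ℝ} (hS : ∀ a b, 0 ≤ S a b)
    {M M' : Matrix (Fin k) I ℝ} (hM : ∀ a, ∑ i, |M i a| = 1) (hM' : ∀ a, ∑ i, |M' i a| = 1)
    {δ : ℝ} (hδ : ∀ a, ∑ i, |(M' - M) i a| ≤ δ) :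
    l1 (M' * S * M'ᵀ - M * S * Mᵀ) ≤ 2 * gamma S * δ := by
  have hsplit : M' * S * M'ᵀ - M * S * Mᵀ = (M' - M) * S * M'ᵀ + M * S * (M' - M)ᵀ := by
    simp only [Matrix.sub_mul, Matrix.mul_sub, Matrix.transpose_sub]
    abel
  calc l1 (M' * S * M'ᵀ - M * S * Mᵀ)
      ≤ l1 ((M' - M) * S * M'ᵀ) + l1 (M * S * (M' - M)ᵀ) := hsplit ▸ l1_add_le _ _
    _ ≤ ∑ a, ∑ b, S a b * δ + ∑ a, ∑ b, S a b * δ := by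
        gcongr
        · refine (l1_mul_mul_transpose_le _ _ _).trans (Finset.sum_le_sum fun a _ =>
            Finset.sum_le_sum fun b _ => ?_)
          rw [hM', mul_one, abs_of_nonneg (hS a b)]
          exact mul_le_mul_of_nonneg_left (hδ a) (hS a b)
        · refine (l1_mul_mul_transpose_le _ _ _).trans (Finset.sum_le_sum fun a _ =>
            Finset.sum_le_sum fun b _ => ?_)
          rw [hM, one_mul, abs_of_nonneg (hS a b)]
          exact mul_le_mul_of_nonneg_left (hδ b) (hS a b)
    _ = 2 * gamma S * δ := by
        simp only [gamma, ← Finset.sum_mul]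
        ring

end L1

theorem stmt_12_general (c : ℝ) (k t : ℕ) (hk : 0 < k) (ht : 0 < t)
    (n : ℕ) (S : Matrix (Fin n) (Fin n) ℝ) (hnn : ∀ i j, 0 ≤ S i j) (hγ : gamma S = c) :
    hdistLE (⋃ X ∈ matShape S t, matShape X k) (matShape S k) (2 * c * k / t) := by
  refine ⟨fun X hX => ?_, ?_⟩
  · obtain ⟨Z, hZ, hXZ⟩ := Set.mem_iUnion₂.1 hX
    have hε : 0 ≤ 2 * c * k / t := hγ ▸ by have := gamma_nonneg hnn; positivity
    exact ⟨X, matShape_subset_of_mem_matShape ht.ne' hZ hXZ, by simpa [l1] using hε⟩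
  · rintro _ ⟨M, hM, rfl⟩
    obtain ⟨N, hN, P, hP, hNP⟩ := exists_mul_mem_Kset_near hk.ne' ht.ne' hM
    refine ⟨N * P * S * (N * P)ᵀ, Set.mem_iUnion₂.2 ⟨P * S * Pᵀ, ⟨P, hP, rfl⟩, N, hN, ?_⟩, ?_⟩
    · simp only [Matrix.transpose_mul, Matrix.mul_assoc]
    · calc l1 (N * P * S * (N * P)ᵀ - M * S * Mᵀ) ≤ 2 * gamma S * (k / t) :=
            l1_mul_mul_transpose_sub_le hnn (sum_abs_col_of_mem_Kset hM)
              (sum_abs_col_of_mem_Kset (mul_mem_Kset ht.ne' hN hP)) hNP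
        _ = 2 * c * k / t := by rw [hγ]; ring

/-- For a nonnegative `n × n` matrix `S` with `γ(S) = c`, the ℓ¹-Hausdorff
distance between `C(C(S,t),k)` and `C(S,k)` is at most `2ck/t`. -/
theorem stmt_12 (c : ℝ) (hc : 0 < c) (k t : ℕ) (hk : 0 < k) (ht : 0 < t)
    (n : ℕ) (S : Matrix (Fin n) (Fin n) ℝ) (hnn : ∀ i j, 0 ≤ S i j) (hγ : gamma S = c) :
    hdistLE (⋃ X ∈ matShape S t, matShape X k) (matShape S k) (2 * c * k / t) :=
  stmt_12_general c k t hk ht n S hnn hγ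
end
end

section
/- Let X and Y be two nonnegative real matrices of the same size n×n such that ‖X − Y‖₁ ≤ ε, and let M ∈ K(k,n) for some positive integer k. Then ‖M X Mᵀ − M Y Mᵀ‖₁ ≤ ε. -/
open MeasureTheory Matrix
open scoped Pointwise

noncomputable section

/-- If `‖X − Y‖₁ ≤ ε` and `M ∈ K(k,n)` then `‖M X Mᵀ − M Y Mᵀ‖₁ ≤ ε`. -/
theorem stmt_13 (n k : ℕ) (hk : 0 < k) (ε : ℝ) (X Y : Matrix (Fin n) (Fin n) ℝ)
    (hX : ∀ i j, 0 ≤ X i j) (hY : ∀ i j, 0 ≤ Y i j)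
    (h : l1 (X - Y) ≤ ε) (M : Matrix (Fin k) (Fin n) ℝ) (hM : M ∈ Kset k (Fin n)) :
    l1 (M * X * Mᵀ - M * Y * Mᵀ) ≤ ε := by
  obtain ⟨hMnn, _, hcol⟩ := hM
  have hMD : M * X * Mᵀ - M * Y * Mᵀ = M * (X - Y) * Mᵀ := by
    rw [Matrix.mul_sub, Matrix.sub_mul]
  rw [hMD]
  set D := X - Y with hD
  refine le_trans ?_ h
  unfold l1
  calc ∑ i, ∑ j, |(M * D * Mᵀ) i j|
      ≤ ∑ i, ∑ j, ∑ b, ∑ a, M i a * |D a b| * M j b := by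
        refine Finset.sum_le_sum fun i _ => Finset.sum_le_sum fun j _ => ?_
        rw [Matrix.mul_apply]
        refine le_trans (Finset.abs_sum_le_sum_abs _ _) (Finset.sum_le_sum fun b _ => ?_)
        rw [Matrix.mul_apply, Matrix.transpose_apply, abs_mul, abs_of_nonneg (hMnn j b),
          ← Finset.sum_mul]
        refine mul_le_mul_of_nonneg_right ?_ (hMnn j b)
        refine le_trans (Finset.abs_sum_le_sum_abs _ _) (le_of_eq ?_)
        refine Finset.sum_congr rfl fun a _ => ?_
        rw [abs_mul, abs_of_nonneg (hMnn i a)]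
    _ = ∑ i, ∑ b, ∑ a, ∑ j, M i a * |D a b| * M j b := by
        refine Finset.sum_congr rfl fun i _ => ?_
        rw [Finset.sum_comm]
        exact Finset.sum_congr rfl fun b _ => Finset.sum_comm
    _ = ∑ i, ∑ b, ∑ a, M i a * |D a b| := by
        refine Finset.sum_congr rfl fun i _ => Finset.sum_congr rfl fun b _ =>
          Finset.sum_congr rfl fun a _ => ?_
        rw [← Finset.mul_sum, hcol b, mul_one]
    _ = ∑ b, ∑ a, ∑ i, M i a * |D a b| := by
        rw [Finset.sum_comm]
        exact Finset.sum_congr rfl fun b _ => Finset.sum_comm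
    _ = ∑ b, ∑ a, |D a b| := by
        refine Finset.sum_congr rfl fun b _ => Finset.sum_congr rfl fun a _ => ?_
        rw [← Finset.sum_mul, hcol a, one_mul]
    _ = ∑ a, ∑ b, |D a b| := Finset.sum_comm
end
end
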